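/- Let G be a finite connected simple graph with n vertices and m edges, n ≥ 2. Then every vertex of Aux(G) has degree at least 2 · (m − n + 1); in particular the minimum degree of Aux(G) satisfies δ(Aux(G)) ≥ 2(m − n + 1). -/

import Mathlib

open SimpleGraph

/-- A spanning tree of `G`: a spanning subgraph (a graph on the same vertex set whose
edges are edges of `G`) that is a tree (connected and acyclic). -/
def IsSpanningTree {V : Type*} (G T : SimpleGraph V) : Prop :=
  T ≤ G ∧ T.IsTree

/-- The spanning tree auxiliary graph `Aux G`: vertices are the spanning trees of `G`,
two spanning trees being adjacent iff the symmetric difference of their edge sets has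
exactly two edges. -/
def Aux {V : Type*} (G : SimpleGraph V) :
    SimpleGraph {T : SimpleGraph V // IsSpanningTree G T} where
  Adj T₁ T₂ := (symmDiff T₁.1.edgeSet T₂.1.edgeSet).ncard = 2
  symm := by
    constructor
    intro T₁ T₂ h
    beta_reduce at h ⊢
    rwa [symmDiff_comm]
  loopless := by
    constructor
    intro T h
    simp [symmDiff_self] at h

/-- `G` is 2-connected: it is connected and remains connected after deleting any
single vertex. -/
def TwoConnected {V : Type*} (G : SimpleGraph V) : Prop :=
  G.Connected ∧ ∀ v : V, (G.induce ({v}ᶜ : Set V)).Connected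


private lemma reach_transport {V : Type*} {G H : SimpleGraph V}
    (h : ∀ a b : V, G.Adj a b → H.Reachable a b) {a b : V} (w : G.Walk a b) :
    H.Reachable a b := by
  induction w with
  | nil => exact Reachable.refl _
  | cons hadj _ ih => exact (h _ _ hadj).trans ih

private lemma reach_of_path_edge {V : Type*} {T H : SimpleGraph V} :
    ∀ {u v : V} (p : T.Walk u v), p.edges.Nodup →
    ∀ a b : V, s(a, b) ∈ p.edges →
    (∀ e ∈ p.edges, e ≠ s(a, b) → e ∈ H.edgeSet) →
    H.Reachable u v → H.Reachable a b := by
  intro u v p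
  induction p with
  | nil => intro _ a b h; simp at h
  | @cons u w v hadj q ih =>
    intro hnd a b hmem hedges huv
    rw [SimpleGraph.Walk.edges_cons, List.nodup_cons] at hnd
    rcases List.mem_cons.mp hmem with heq | hmem'
    · have hq : ∀ e ∈ q.edges, e ∈ H.edgeSet := by
        intro e heq'
        refine hedges e (List.mem_cons_of_mem _ heq') ?_
        rintro rfl
        rw [heq] at heq'
        exact hnd.1 heq'
      have hwv : H.Reachable w v := (q.transfer H hq).reachable
      have huw : H.Reachable u w := huv.trans hwv.symm
      rcases Sym2.eq_iff.mp heq with ⟨rfl, rfl⟩ | ⟨rfl, rfl⟩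
      · exact huw
      · exact huw.symm
    · have hne : s(u, w) ≠ s(a, b) := fun h => hnd.1 (h ▸ hmem')
      have huwH : H.Adj u w := (SimpleGraph.mem_edgeSet H).mp
        (hedges _ (List.mem_cons_self) hne)
      exact ih hnd.2 a b hmem'
        (fun e he hne' => hedges e (List.mem_cons_of_mem _ he) hne')
        (huwH.symm.reachable.trans huv)

private lemma symmDiff_exchange {α : Type*} {s : Set α} {f e : α}
    (hf : f ∈ s) (he : e ∉ s) :
    symmDiff s ((s \ {f}) ∪ {e}) = {f, e} := by
  ext x
  simp only [symmDiff_def, Set.sup_eq_union, Set.mem_union, Set.mem_diff,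
    Set.mem_singleton_iff, Set.mem_insert_iff]
  constructor
  · rintro (⟨hxs, hx⟩ | ⟨hx, hxs⟩)
    · push_neg at hx
      left; exact hx.1 hxs
    · rcases hx with ⟨h1, _⟩ | rfl
      · exact absurd h1 hxs
      · right; rfl
  · rintro (rfl | rfl)
    · left; refine ⟨hf, ?_⟩
      rintro (⟨_, h⟩ | rfl)
      · exact h rfl
      · exact he hf
    · right
      exact ⟨Or.inr rfl, he⟩

private lemma diff_exchange {α : Type*} {s : Set α} {f e : α} (he : e ∉ s) :
    ((s \ {f}) ∪ {e}) \ s = {e} := by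
  ext x
  simp only [Set.mem_diff, Set.mem_union, Set.mem_singleton_iff]
  constructor
  · rintro ⟨⟨h1, _⟩ | rfl, h2⟩
    · exact absurd h1 h2
    · rfl
  · rintro rfl
    exact ⟨Or.inr rfl, he⟩

private lemma exchange {V : Type*} {G T : SimpleGraph V} (hle : T ≤ G) (hT : T.IsTree)
    {u v : V} (huv : G.Adj u v) (he : s(u, v) ∉ T.edgeSet)
    {p : T.Walk u v} (hp : p.IsPath)
    (hpu : ∀ q : T.Walk u v, q.IsPath → q = p)
    {f : Sym2 V} (hf : f ∈ p.edges) :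
    IsSpanningTree G (SimpleGraph.fromEdgeSet ((T.edgeSet \ {f}) ∪ {s(u, v)})) ∧
      (SimpleGraph.fromEdgeSet ((T.edgeSet \ {f}) ∪ {s(u, v)})).edgeSet
        = (T.edgeSet \ {f}) ∪ {s(u, v)} := by
  set S : Set (Sym2 V) := (T.edgeSet \ {f}) ∪ {s(u, v)} with hS
  set T' : SimpleGraph V := SimpleGraph.fromEdgeSet S with hT'
  have hfT : f ∈ T.edgeSet := p.edges_subset_edgeSet hf
  have hfe : f ≠ s(u, v) := fun h => he (h ▸ hfT)
  have hdiag : ∀ e ∈ S, ¬e.IsDiag := by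
    rintro e (⟨heT, -⟩ | rfl)
    · exact T.not_isDiag_of_mem_edgeSet heT
    · rw [Sym2.mk_isDiag_iff]; exact huv.ne
  have hES : T'.edgeSet = S := by
    rw [hT', edgeSet_fromEdgeSet, sdiff_eq_left]
    exact Set.disjoint_left.mpr fun e heS hdg => hdiag e heS hdg
  classical
  refine ⟨⟨?_, ?_, ?_⟩, hES⟩
  · -- T' ≤ G
    have hsub : S ⊆ G.edgeSet := by
      rintro e (⟨heT, -⟩ | rfl)
      · exact edgeSet_subset_edgeSet.mpr hle heT
      · exact (mem_edgeSet G).mpr huv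
    calc T' ≤ SimpleGraph.fromEdgeSet G.edgeSet := fromEdgeSet_mono hsub
      _ = G := fromEdgeSet_edgeSet G
  · -- connected
    haveI : Nonempty V := hT.isConnected.nonempty
    refine Connected.mk fun x y => ?_
    refine reach_transport (G := T) (fun a b hab => ?_)
      (hT.isConnected.preconnected x y).some
    by_cases habf : s(a, b) = f
    · refine reach_of_path_edge p hp.edges_nodup a b (habf ▸ hf) ?_ ?_
      · intro e hep hne
        rw [hES, hS]
        left
        exact ⟨p.edges_subset_edgeSet hep, by rwa [habf] at hne⟩
      · have : T'.Adj u v := (mem_edgeSet T').mp (by rw [hES, hS]; right; rfl)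
        exact this.reachable
    · have : T'.Adj a b := (mem_edgeSet T').mp
        (by rw [hES, hS]; left; exact ⟨(mem_edgeSet T).mpr hab, habf⟩)
      exact this.reachable
  · -- acyclic
    intro a c hc
    by_cases hce : s(u, v) ∈ c.edges
    · obtain ⟨-, hreach⟩ :=
        (adj_and_reachable_delete_edges_iff_exists_cycle (G := T')).mpr ⟨a, c, hc, hce⟩
      have hle2 : T' \ SimpleGraph.fromEdgeSet {s(u, v)} ≤ T \ SimpleGraph.fromEdgeSet {f} := by
        intro x y hxy
        rw [sdiff_adj] at hxy ⊢
        rw [fromEdgeSet_adj] at hxy ⊢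
        obtain ⟨hxy1, hxy2⟩ := hxy
        have hxyS : s(x, y) ∈ S := hxy1.1
        have hne_uv : s(x, y) ≠ s(u, v) := fun h => hxy2 ⟨by simp [h], hxy1.2⟩
        have hxyT : s(x, y) ∈ T.edgeSet \ {f} := by
          rcases hxyS with h1 | h1
          · exact h1
          · exact absurd h1 hne_uv
        refine ⟨(mem_edgeSet T).mp hxyT.1, ?_⟩
        rintro ⟨h1, -⟩
        exact hxyT.2 h1
      obtain ⟨w⟩ := hreach.mono hle2
      have hw : ∀ e ∈ w.edges, e ∈ T.edgeSet := by
        intro e hew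
        have h2 := w.edges_subset_edgeSet hew
        rw [edgeSet_sdiff] at h2
        exact h2.1
      have hfw : f ∉ w.edges := by
        intro hfw
        have := w.edges_subset_edgeSet hfw
        rw [edgeSet_sdiff] at this
        refine this.2 ?_
        rw [edgeSet_fromEdgeSet]
        exact ⟨rfl, T.not_isDiag_of_mem_edgeSet hfT⟩
      have hq := hpu ((w.transfer T hw).toPath : T.Walk u v) (w.transfer T hw).toPath.2
      apply hfw
      rw [← w.edges_transfer hw]
      exact SimpleGraph.Walk.edges_toPath_subset _ (hq ▸ hf)
    · have hce' : ∀ e ∈ c.edges, e ∈ T.edgeSet := by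
        intro e hec
        have := c.edges_subset_edgeSet hec
        rw [hES, hS] at this
        rcases this with ⟨h1, -⟩ | rfl
        · exact h1
        · exact absurd hec hce
      exact hT.IsAcyclic (c.transfer T hce') (hc.transfer hce')

private lemma two_neighbors {V : Type*} {G : SimpleGraph V}
    (T : {T : SimpleGraph V // IsSpanningTree G T})
    {e : Sym2 V} (he : e ∈ G.edgeSet \ T.1.edgeSet) :
    ∃ T₁ T₂ : {T' : SimpleGraph V // IsSpanningTree G T'}, T₁ ≠ T₂ ∧
      (Aux G).Adj T T₁ ∧ (Aux G).Adj T T₂ ∧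
      T₁.1.edgeSet \ T.1.edgeSet = {e} ∧ T₂.1.edgeSet \ T.1.edgeSet = {e} := by
  obtain ⟨Tg, hle, hTree⟩ := T
  induction e using Sym2.ind with
  | _ u v =>
  obtain ⟨heG, heT⟩ := he
  have huv : G.Adj u v := (mem_edgeSet G).mp heG
  obtain ⟨p, hp, hpu⟩ := hTree.existsUnique_path u v
  obtain ⟨f₁, f₂, hf1, hf2, hf12⟩ :
      ∃ f₁ f₂, f₁ ∈ p.edges ∧ f₂ ∈ p.edges ∧ f₁ ≠ f₂ := by
    cases p with
    | nil => exact absurd rfl huv.ne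
    | cons h q =>
      cases q with
      | nil => exact absurd ((mem_edgeSet Tg).mpr h) heT
      | cons h' r =>
        rename_i b c
        have hnd := hp.edges_nodup
        simp only [SimpleGraph.Walk.edges_cons, List.nodup_cons] at hnd
        refine ⟨s(u, b), s(b, c), by simp, by simp, ?_⟩
        intro hh
        apply hnd.1
        rw [hh]
        exact List.mem_cons_self
  have hf1T : f₁ ∈ Tg.edgeSet := p.edges_subset_edgeSet hf1
  have hf2T : f₂ ∈ Tg.edgeSet := p.edges_subset_edgeSet hf2
  have hne1 : f₁ ≠ s(u, v) := fun h => heT (h ▸ hf1T)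
  have hne2 : f₂ ≠ s(u, v) := fun h => heT (h ▸ hf2T)
  obtain ⟨hst1, hES1⟩ := exchange hle hTree huv heT hp hpu hf1
  obtain ⟨hst2, hES2⟩ := exchange hle hTree huv heT hp hpu hf2
  refine ⟨⟨_, hst1⟩, ⟨_, hst2⟩, ?_, ?_, ?_, ?_, ?_⟩
  · intro hh
    rw [Subtype.mk.injEq] at hh
    have heq : (SimpleGraph.fromEdgeSet ((Tg.edgeSet \ {f₁}) ∪ {s(u, v)})).edgeSet
        = (SimpleGraph.fromEdgeSet ((Tg.edgeSet \ {f₂}) ∪ {s(u, v)})).edgeSet := by rw [hh]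
    rw [hES1, hES2] at heq
    have h2 : f₂ ∈ (Tg.edgeSet \ {f₁}) ∪ {s(u, v)} :=
      Or.inl ⟨hf2T, fun hq => hf12 (Set.mem_singleton_iff.mp hq).symm⟩
    rw [heq] at h2
    rcases h2 with ⟨-, hbad⟩ | hbad
    · exact hbad rfl
    · exact hne2 hbad
  · show (symmDiff Tg.edgeSet
      (SimpleGraph.fromEdgeSet ((Tg.edgeSet \ {f₁}) ∪ {s(u, v)})).edgeSet).ncard = 2
    rw [hES1, symmDiff_exchange hf1T heT, Set.ncard_pair hne1]
  · show (symmDiff Tg.edgeSet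
      (SimpleGraph.fromEdgeSet ((Tg.edgeSet \ {f₂}) ∪ {s(u, v)})).edgeSet).ncard = 2
    rw [hES2, symmDiff_exchange hf2T heT, Set.ncard_pair hne2]
  · rw [hES1]; exact diff_exchange heT
  · rw [hES2]; exact diff_exchange heT

/-- Every vertex of `Aux G` has degree at least `2 * (m - n + 1)`, where `n` and `m`
are the numbers of vertices and edges of the connected graph `G`. -/
theorem stmt13 {V : Type*} [Fintype V] (G : SimpleGraph V) (hG : G.Connected)
    (hV : 2 ≤ Fintype.card V)
    (T : {T : SimpleGraph V // IsSpanningTree G T}) :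
    2 * (G.edgeSet.ncard + 1 - Fintype.card V) ≤ ((Aux G).neighborSet T).ncard := by
  classical
  set D : Set (Sym2 V) := G.edgeSet \ T.1.edgeSet with hD
  have hTsub : T.1.edgeSet ⊆ G.edgeSet := edgeSet_subset_edgeSet.mpr T.2.1
  have hGfin : G.edgeSet.Finite := Set.toFinite _
  have hTcard : T.1.edgeSet.ncard + 1 = Fintype.card V := by
    have h1 := T.2.2.card_edgeFinset
    have h2 : T.1.edgeSet.toFinset = T.1.edgeFinset := by
      ext e
      simp [SimpleGraph.mem_edgeFinset, Set.mem_toFinset]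
    rw [Set.ncard_eq_toFinset_card', h2]
    exact h1
  have hTle : T.1.edgeSet.ncard ≤ G.edgeSet.ncard := Set.ncard_le_ncard hTsub hGfin
  have hDcard : D.ncard = G.edgeSet.ncard + 1 - Fintype.card V := by
    rw [hD, Set.ncard_diff hTsub (hGfin.subset hTsub)]
    omega
  haveI : Nonempty {T' : SimpleGraph V // IsSpanningTree G T'} := ⟨T⟩
  choose! F₁ F₂ hne h1 h2 hs1 hs2 using fun e (he : e ∈ D) => two_neighbors T he
  set A : Set {T' : SimpleGraph V // IsSpanningTree G T'} := F₁ '' D with hA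
  set B : Set {T' : SimpleGraph V // IsSpanningTree G T'} := F₂ '' D with hB
  have hinj1 : Set.InjOn F₁ D := by
    intro e he e' he' heq
    have hx := hs1 e he
    rw [heq, hs1 e' he'] at hx
    exact (Set.singleton_eq_singleton_iff.mp hx).symm
  have hinj2 : Set.InjOn F₂ D := by
    intro e he e' he' heq
    have hx := hs2 e he
    rw [heq, hs2 e' he'] at hx
    exact (Set.singleton_eq_singleton_iff.mp hx).symm
  have hAB : Disjoint A B := by
    rw [Set.disjoint_left]
    rintro x ⟨e, he, rfl⟩ ⟨e', he', heq⟩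
    have hx := hs2 e' he'
    rw [heq, hs1 e he] at hx
    have : e' = e := Set.singleton_eq_singleton_iff.mp hx.symm
    subst this
    exact hne e' he' (heq.symm)
  have hsubN : A ∪ B ⊆ (Aux G).neighborSet T := by
    rintro x (⟨e, he, rfl⟩ | ⟨e, he, rfl⟩)
    · exact ((Aux G).mem_neighborSet T _).mpr (h1 e he)
    · exact ((Aux G).mem_neighborSet T _).mpr (h2 e he)
  have hNfin : ((Aux G).neighborSet T).Finite := Set.toFinite _
  have hcardA : A.ncard = D.ncard := Set.ncard_image_of_injOn hinj1
  have hcardB : B.ncard = D.ncard := Set.ncard_image_of_injOn hinj2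
  have hun : (A ∪ B).ncard = A.ncard + B.ncard :=
    Set.ncard_union_eq hAB (Set.toFinite _) (Set.toFinite _)
  have hle : (A ∪ B).ncard ≤ ((Aux G).neighborSet T).ncard :=
    Set.ncard_le_ncard hsubN hNfin
  omega
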